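/- Let A be analytic on the open unit disc 𝔻 and let ζ ∈ ∂𝔻. Suppose that for each δ > 0 there exists a non-trivial solution of f'' + A f = 0 having two distinct zeros in D(ζ,δ) ∩ 𝔻. Then there exists a sequence {wₙ} ⊂ 𝔻 with wₙ → ζ such that the sequence |A(wₙ)|(1−|wₙ|²)² has a limit c ∈ [1,∞], i.e. it either tends to +∞ or converges to a real number c ≥ 1. -/

import Mathlib

/-!
Given zeros `z₁ ≠ z₂` of `f`, take a disc automorphism `φ` with `φ 0 = z₁` and `φ x = z₂` for
some real `0 < x < 1`. The pullback `h = (f ∘ φ) / √φ'` solves `h'' + B h = 0` with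
`B = (A ∘ φ) φ'²`, and `‖B t‖ (1 - t²)² = ‖A (φ t)‖ (1 - ‖φ t‖²)²` because
`‖φ'‖ (1 - ‖z‖²) = 1 - ‖φ z‖²`. Between consecutive real zeros of `h`, `u = ‖h‖` satisfies
`u'' ≥ -‖B‖ u`, whereas `√(1 - t²)` is a positive solution of `v'' + v / (1 - t²)² = 0`; by Sturm
comparison `‖B t‖ (1 - t²)² ≥ 1` somewhere there. The segment `φ [0, x]` stays within
`‖z₂ - z₁‖` of `z₁`, so zeros close to `ζ` produce points close to `ζ` where
`‖A w‖ (1 - ‖w‖²)² ≥ 1`, and a subsequence of these values converges in `[1, ∞]`.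
-/

open Complex Metric Filter Topology
open Set
open scoped RealInnerProductSpace ComplexConjugate

theorem sturm_comparison {u u' u'' v v' v'' p q : ℝ → ℝ} {a b : ℝ} (hab : a < b)
    (hu : ContinuousOn u (Icc a b)) (hv : ContinuousOn v (Icc a b))
    (hu' : ∀ t ∈ Ioo a b, HasDerivAt u (u' t) t) (hu'' : ∀ t ∈ Ioo a b, HasDerivAt u' (u'' t) t)
    (hv' : ∀ t ∈ Ioo a b, HasDerivAt v (v' t) t) (hv'' : ∀ t ∈ Ioo a b, HasDerivAt v' (v'' t) t)
    (hua : u a = 0) (hub : u b = 0) (hu_pos : ∀ t ∈ Ioo a b, 0 < u t)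
    (hv_pos : ∀ t ∈ Icc a b, 0 < v t)
    (hq : ∀ t ∈ Ioo a b, -(q t * u t) ≤ u'' t) (hp : ∀ t ∈ Ioo a b, v'' t = -(p t * v t))
    (hqp : ∀ t ∈ Ioo a b, q t < p t) : False := by
  set W := fun t => u' t * v t - u t * v' t
  have hW : ∀ t ∈ Ioo a b, HasDerivAt W (u'' t * v t - u t * v'' t) t := fun t ht => by
    refine (((hu'' t ht).mul (hv' t ht)).sub ((hu' t ht).mul (hv'' t ht))).congr_deriv ?_
    ring
  have hW_mono : StrictMonoOn W (Ioo a b) := by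
    refine strictMonoOn_of_deriv_pos (convex_Ioo a b)
      (fun t ht => (hW t ht).continuousAt.continuousWithinAt) fun t ht => ?_
    rw [interior_Ioo] at ht
    have huv := mul_pos (hu_pos t ht) (hv_pos t (Ioo_subset_Icc_self ht))
    rw [(hW t ht).deriv, hp t ht]
    nlinarith [hq t ht, hqp t ht, hv_pos t (Ioo_subset_Icc_self ht)]
  set G := fun t => u t / v t
  have hG : ∀ t ∈ Ioo a b, HasDerivAt G (W t / v t ^ 2) t := fun t ht =>
    (hu' t ht).div (hv' t ht) (hv_pos t (Ioo_subset_Icc_self ht)).ne'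
  have hGc : ContinuousOn G (Icc a b) := hu.div hv fun t ht => (hv_pos t ht).ne'
  -- `G' = W / v²` vanishes at some `c`, so `W > 0` and `G` increases on `(c, b]`, but `G b = 0`
  obtain ⟨c, hc, hWc⟩ := exists_hasDerivAt_eq_zero hab hGc (by simp [G, hua, hub]) hG
  have hvc := hv_pos c (Ioo_subset_Icc_self hc)
  have hWc0 : W c = 0 := by simpa [hvc.ne'] using hWc
  have hG_mono : StrictMonoOn G (Icc c b) := by
    refine strictMonoOn_of_deriv_pos (convex_Icc c b) (hGc.mono (Icc_subset_Icc hc.1.le le_rfl))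
      fun t ht => ?_
    rw [interior_Icc] at ht
    have ht' : t ∈ Ioo a b := ⟨hc.1.trans ht.1, ht.2⟩
    rw [(hG t ht').deriv]
    exact div_pos (hWc0 ▸ hW_mono hc ht' ht.1) (pow_pos (hv_pos t (Ioo_subset_Icc_self ht')) 2)
  have hGcb := hG_mono (left_mem_Icc.2 hc.2.le) (right_mem_Icc.2 hc.2.le) hc.2
  simp only [G, hub, zero_div] at hGcb
  exact hGcb.not_gt (div_pos (hu_pos c hc) hvc)

theorem hasDerivAt_sqrt_one_sub_sq {t : ℝ} (ht : t ^ 2 < 1) :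
    HasDerivAt (fun s => √(1 - s ^ 2)) (-t / √(1 - t ^ 2)) t := by
  have h := ((hasDerivAt_pow 2 t).const_sub 1).sqrt (by linarith)
  convert h using 1
  have : 0 < √(1 - t ^ 2) := Real.sqrt_pos.2 (by linarith)
  field_simp
  ring

theorem hasDerivAt_neg_div_sqrt_one_sub_sq {t : ℝ} (ht : t ^ 2 < 1) :
    HasDerivAt (fun s => -s / √(1 - s ^ 2)) (-(1 / (1 - t ^ 2) ^ 2 * √(1 - t ^ 2))) t := by
  have hpos : 0 < 1 - t ^ 2 := by linarith
  have hs : 0 < √(1 - t ^ 2) := Real.sqrt_pos.2 hpos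
  refine ((hasDerivAt_id' t).neg.div (hasDerivAt_sqrt_one_sub_sq ht) hs.ne').congr_deriv ?_
  have hsq : √(1 - t ^ 2) ^ 2 = 1 - t ^ 2 := Real.sq_sqrt hpos.le
  generalize √(1 - t ^ 2) = r at hs hsq ⊢
  rw [← hsq]
  field_simp
  simp only [Pi.neg_apply]
  linear_combination -hsq

section InnerProductSpace

variable {E : Type*} [NormedAddCommGroup E] [InnerProductSpace ℝ E]

theorem HasDerivAt.norm {γ : ℝ → E} {γ' : E} {t : ℝ} (hγ : HasDerivAt γ γ' t) (h0 : γ t ≠ 0) :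
    HasDerivAt (fun s => ‖γ s‖) (⟪γ t, γ'⟫ / ‖γ t‖) t := by
  have hpos : 0 < ‖γ t‖ := norm_pos_iff.2 h0
  have h := hγ.norm_sq.sqrt (by positivity)
  simp only [Real.sqrt_sq (norm_nonneg _)] at h
  convert h using 1
  field_simp

theorem HasDerivAt.exists_hasDerivAt_inner_div_norm_ge {γ γ' : ℝ → E} {γ'' : E} {t : ℝ}
    (hγ : HasDerivAt γ (γ' t) t) (hγ' : HasDerivAt γ' γ'' t) (h0 : γ t ≠ 0) :
    ∃ d, HasDerivAt (fun s => ⟪γ s, γ' s⟫ / ‖γ s‖) d t ∧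
      ⟪γ t, γ''⟫ / ‖γ t‖ ≤ d := by
  have hpos : 0 < ‖γ t‖ := norm_pos_iff.2 h0
  refine ⟨_, (hγ.inner ℝ hγ').div (hγ.norm h0) hpos.ne', ?_⟩
  have hcs := real_inner_mul_inner_self_le (γ t) (γ' t)
  rw [real_inner_self_eq_norm_sq, real_inner_self_eq_norm_sq] at hcs
  rw [div_le_div_iff₀ hpos (by positivity)]
  field_simp
  rw [real_inner_self_eq_norm_sq]
  nlinarith [hcs]

end InnerProductSpace

theorem exists_last_zero_before {E : Type*} [TopologicalSpace E] [T1Space E] [Zero E]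
    {g : ℝ → E} {a b : ℝ} (hab : a < b) (hg : ContinuousOn g (Icc a b)) (ha : g a = 0)
    (hb : ∀ᶠ t in 𝓝[<] b, g t ≠ 0) :
    ∃ t₀ ∈ Ico a b, g t₀ = 0 ∧ ∀ t ∈ Ioo t₀ b, g t ≠ 0 := by
  obtain ⟨c, hc, hcb⟩ := (mem_nhdsLT_iff_exists_mem_Ico_Ioo_subset hab).1 hb
  set Z := Icc a c ∩ g ⁻¹' {0}
  have hZ : IsCompact Z := isCompact_Icc.of_isClosed_subset
    ((hg.mono (Icc_subset_Icc le_rfl hc.2.le)).preimage_isClosed_of_isClosed isClosed_Icc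
      isClosed_singleton) inter_subset_left
  have haZ : a ∈ Z := ⟨⟨le_rfl, hc.1⟩, ha⟩
  have hmax := hZ.sSup_mem ⟨a, haZ⟩
  refine ⟨sSup Z, ⟨hmax.1.1, hmax.1.2.trans_lt hc.2⟩, hmax.2, fun t ht hgt => ?_⟩
  rcases le_or_gt t c with htc | htc
  · exact ht.1.not_ge (le_csSup hZ.bddAbove ⟨⟨(hmax.1.1.trans ht.1.le), htc⟩, hgt⟩)
  · exact hcb ⟨htc, ht.2⟩ hgt

theorem mapsTo_ofReal_Icc_ball {a b : ℝ} (ha : -1 < a) (hb : b < 1) :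
    MapsTo ((↑) : ℝ → ℂ) (Icc a b) (ball 0 1) := fun t ht => by
  rw [mem_ball_zero_iff, Complex.norm_real, Real.norm_eq_abs, abs_lt]
  exact ⟨ha.trans_le ht.1, ht.2.trans_lt hb⟩

noncomputable def moebius (a μ z : ℂ) : ℂ := (a + μ * z) / (1 + conj a * μ * z)

section Moebius

variable {a μ z : ℂ}

@[simp]
theorem moebius_zero (a μ : ℂ) : moebius a μ 0 = a := by simp [moebius]

theorem moebius_mul_left (a μ ν z : ℂ) : moebius a (μ * ν) z = moebius a μ (ν * z) := by
  simp only [moebius, mul_assoc]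

theorem one_add_conj_mul_ne_zero (ha : ‖a‖ < 1) (hμ : ‖μ‖ = 1) (hz : ‖z‖ < 1) :
    1 + conj a * μ * z ≠ 0 := by
  intro h
  have h1 : ‖conj a * μ * z‖ = 1 := by
    rw [show conj a * μ * z = -1 by linear_combination h, norm_neg, norm_one]
  rw [norm_mul, norm_mul, Complex.norm_conj, hμ, mul_one] at h1
  nlinarith [norm_nonneg a, norm_nonneg z]

theorem norm_sq_one_add_conj_mul_sub (hμ : ‖μ‖ = 1) (a z : ℂ) :
    ‖1 + conj a * μ * z‖ ^ 2 - ‖a + μ * z‖ ^ 2 = (1 - ‖a‖ ^ 2) * (1 - ‖z‖ ^ 2) := by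
  have hμ' : μ * conj μ = 1 := by rw [Complex.mul_conj', hμ]; simp
  apply Complex.ofReal_injective
  push_cast
  simp only [← Complex.mul_conj', map_add, map_mul, map_one, Complex.conj_conj]
  linear_combination (a * conj a * z * conj z - z * conj z) * hμ'

theorem one_sub_norm_moebius_sq (hμ : ‖μ‖ = 1) (hD : 1 + conj a * μ * z ≠ 0) :
    1 - ‖moebius a μ z‖ ^ 2 = (1 - ‖a‖ ^ 2) * (1 - ‖z‖ ^ 2) / ‖1 + conj a * μ * z‖ ^ 2 := by
  have : 0 < ‖1 + conj a * μ * z‖ ^ 2 := by positivity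
  rw [moebius, norm_div, div_pow, ← norm_sq_one_add_conj_mul_sub hμ, sub_div, div_self this.ne']

theorem mapsTo_moebius (ha : ‖a‖ < 1) (hμ : ‖μ‖ = 1) :
    MapsTo (moebius a μ) (ball 0 1) (ball 0 1) := by
  intro z hz
  rw [mem_ball_zero_iff] at hz ⊢
  have hD := one_add_conj_mul_ne_zero ha hμ hz
  have h := one_sub_norm_moebius_sq hμ hD
  have : 0 < 1 - ‖moebius a μ z‖ ^ 2 := by
    rw [h]
    have : ‖a‖ ^ 2 < 1 := by nlinarith [norm_nonneg a]
    have : ‖z‖ ^ 2 < 1 := by nlinarith [norm_nonneg z]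
    exact div_pos (mul_pos (by linarith) (by linarith)) (by positivity)
  nlinarith [norm_nonneg (moebius a μ z)]

theorem analyticOnNhd_moebius (ha : ‖a‖ < 1) (hμ : ‖μ‖ = 1) :
    AnalyticOnNhd ℂ (moebius a μ) (ball 0 1) := fun _ hz =>
  (analyticAt_const.add (analyticAt_const.mul analyticAt_id)).div
    (analyticAt_const.add (analyticAt_const.mul analyticAt_id))
    (one_add_conj_mul_ne_zero ha hμ (mem_ball_zero_iff.1 hz))

theorem surjOn_moebius (ha : ‖a‖ < 1) (hμ : ‖μ‖ = 1) :
    SurjOn (moebius a μ) (ball 0 1) (ball 0 1) := by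
  intro z hz
  have hw := mapsTo_moebius (a := -(conj μ * a)) (μ := conj μ) (by simpa [hμ] using ha)
    (by simpa using hμ) hz
  refine ⟨_, hw, ?_⟩
  have hμ0 : μ ≠ 0 := norm_ne_zero_iff.1 (hμ ▸ one_ne_zero)
  have hμc : conj μ = μ⁻¹ := by
    rw [Complex.inv_def, Complex.normSq_eq_norm_sq, hμ]; simp
  have hD := one_add_conj_mul_ne_zero ha (μ := -1) (by simp) (mem_ball_zero_iff.1 hz)
  rw [show 1 + conj a * -1 * z = 1 - z * conj a by ring] at hD
  rw [moebius, div_eq_iff (one_add_conj_mul_ne_zero ha hμ (mem_ball_zero_iff.1 hw))]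
  simp only [moebius, map_neg, map_mul, map_inv₀, hμc, inv_inv]
  rw [show 1 + -(μ * conj a) * μ⁻¹ * z = 1 - z * conj a by field_simp; ring]
  field_simp
  ring

theorem exists_moebius_ofReal_eq (ha : ‖a‖ < 1) (hz : z ∈ ball (0 : ℂ) 1) (hne : a ≠ z) :
    ∃ μ : ℂ, ‖μ‖ = 1 ∧ ∃ x : ℝ, 0 < x ∧ x < 1 ∧ moebius a μ x = z := by
  obtain ⟨w, hw, rfl⟩ := surjOn_moebius ha norm_one hz
  have hw0 : w ≠ 0 := by rintro rfl; simp at hne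
  refine ⟨w / ‖w‖, by simp [hw0], ‖w‖, norm_pos_iff.2 hw0, mem_ball_zero_iff.1 hw, ?_⟩
  rw [← one_mul (w / _), moebius_mul_left, div_mul_cancel₀ _ (by simpa using hw0)]

theorem hasDerivAt_moebius (hD : 1 + conj a * μ * z ≠ 0) :
    HasDerivAt (moebius a μ) (μ * (1 - a * conj a) / (1 + conj a * μ * z) ^ 2) z := by
  have hnum : HasDerivAt (fun w => a + μ * w) μ z := by
    simpa using ((hasDerivAt_id z).const_mul μ).const_add a
  have hden : HasDerivAt (fun w => 1 + conj a * μ * w) (conj a * μ) z := by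
    simpa using ((hasDerivAt_id z).const_mul (conj a * μ)).const_add 1
  exact (hnum.div hden hD).congr_deriv (by ring)

theorem norm_deriv_moebius_mul (ha : ‖a‖ < 1) (hμ : ‖μ‖ = 1) (hD : 1 + conj a * μ * z ≠ 0) :
    ‖deriv (moebius a μ) z‖ * (1 - ‖z‖ ^ 2) = 1 - ‖moebius a μ z‖ ^ 2 := by
  have h1 : (1 : ℂ) - a * conj a = ((1 - ‖a‖ ^ 2 : ℝ) : ℂ) := by push_cast [Complex.mul_conj']; rfl
  have h2 : 0 < 1 - ‖a‖ ^ 2 := by nlinarith [norm_nonneg a]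
  rw [(hasDerivAt_moebius hD).deriv, one_sub_norm_moebius_sq hμ hD, h1, norm_div, norm_mul, hμ,
    Complex.norm_real, Real.norm_eq_abs, abs_of_pos h2, norm_pow]
  ring

theorem moebius_sub_self (hD : 1 + conj a * μ * z ≠ 0) :
    moebius a μ z - a = μ * (1 - a * conj a) * z / (1 + conj a * μ * z) := by
  rw [moebius, div_sub' hD]
  ring_nf

theorem norm_moebius_ofReal_sub_le (ha : ‖a‖ < 1) (hμ : ‖μ‖ = 1) {s t : ℝ} (hs : 0 ≤ s)
    (hst : s ≤ t) (ht : t < 1) : ‖moebius a μ s - a‖ ≤ ‖moebius a μ t - a‖ := by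
  have hmem := mapsTo_ofReal_Icc_ball (a := s) (by linarith) ht
  have hDs := one_add_conj_mul_ne_zero ha hμ (mem_ball_zero_iff.1 (hmem (left_mem_Icc.2 hst)))
  have hDt := one_add_conj_mul_ne_zero ha hμ (mem_ball_zero_iff.1 (hmem (right_mem_Icc.2 hst)))
  have key : s * ‖1 + conj a * μ * t‖ ≤ t * ‖1 + conj a * μ * s‖ := by
    have hc : ‖conj a * μ‖ < 1 := by simpa [hμ] using ha
    generalize conj a * μ = c at hc
    have hre : -1 ≤ c.re := by linarith [neg_abs_le c.re, Complex.abs_re_le_norm c]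
    have hsq : ∀ r : ℝ, ‖1 + c * r‖ ^ 2 = 1 + 2 * r * c.re + r ^ 2 * ‖c‖ ^ 2 := fun r => by
      simp only [Complex.sq_norm, Complex.normSq_apply, Complex.add_re, Complex.add_im,
        Complex.mul_re, Complex.mul_im, Complex.ofReal_re, Complex.ofReal_im]
      simp
      ring
    refine (pow_le_pow_iff_left₀ (mul_nonneg hs (norm_nonneg _))
      (mul_nonneg (hs.trans hst) (norm_nonneg _)) two_ne_zero).1 ?_
    rw [mul_pow, mul_pow, hsq, hsq]
    have : 0 ≤ t + s + 2 * s * t * c.re := by nlinarith [mul_nonneg hs (hs.trans hst)]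
    nlinarith [mul_nonneg (sub_nonneg.2 hst) this]
  simp only [moebius_sub_self hDs, moebius_sub_self hDt, norm_div, norm_mul, Complex.norm_real,
    Real.norm_eq_abs, abs_of_nonneg hs, abs_of_nonneg (hs.trans hst)]
  rw [div_le_div_iff₀ (norm_pos_iff.2 hDs) (norm_pos_iff.2 hDt)]
  have := mul_le_mul_of_nonneg_left key (by positivity : 0 ≤ ‖μ‖ * ‖1 - a * conj a‖)
  linarith

end Moebius

/-- `(f ∘ φ) / √φ'` for `φ = moebius a μ`, up to a constant factor. -/
noncomputable def moebiusPullback (f : ℂ → ℂ) (a μ z : ℂ) : ℂ :=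
  f (moebius a μ z) * (1 + conj a * μ * z)

section Pullback

variable {A f : ℂ → ℂ} {a μ : ℂ}

theorem AnalyticOnNhd.moebiusPullback (hf : AnalyticOnNhd ℂ f (ball 0 1)) (ha : ‖a‖ < 1)
    (hμ : ‖μ‖ = 1) : AnalyticOnNhd ℂ (moebiusPullback f a μ) (ball 0 1) :=
  (hf.comp (analyticOnNhd_moebius ha hμ) (mapsTo_moebius ha hμ)).mul
    (analyticOnNhd_const.add (analyticOnNhd_const.mul analyticOnNhd_id))

theorem moebiusPullback_ode (hf : AnalyticOnNhd ℂ f (ball 0 1))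
    (hODE : ∀ w ∈ ball (0 : ℂ) 1, deriv (deriv f) w + A w * f w = 0) (ha : ‖a‖ < 1)
    (hμ : ‖μ‖ = 1) {z : ℂ} (hz : z ∈ ball (0 : ℂ) 1) :
    deriv (deriv (moebiusPullback f a μ)) z +
      A (moebius a μ z) * deriv (moebius a μ) z ^ 2 * moebiusPullback f a μ z = 0 := by
  set φ := moebius a μ with hφ_def
  set c := conj a * μ with hc_def
  set k := μ * (1 - a * conj a)
  have hD : ∀ w ∈ ball (0 : ℂ) 1, 1 + c * w ≠ 0 := fun w hw =>
    one_add_conj_mul_ne_zero ha hμ (mem_ball_zero_iff.1 hw)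
  have hφ : ∀ w ∈ ball (0 : ℂ) 1, HasDerivAt φ (k / (1 + c * w) ^ 2) w := fun w hw =>
    hasDerivAt_moebius (hD w hw)
  have hφw : ∀ w ∈ ball (0 : ℂ) 1, φ w ∈ ball (0 : ℂ) 1 := fun w hw => mapsTo_moebius ha hμ hw
  have hf' : ∀ w ∈ ball (0 : ℂ) 1, HasDerivAt f (deriv f w) w := fun w hw =>
    (hf w hw).differentiableAt.hasDerivAt
  have hf'' : ∀ w ∈ ball (0 : ℂ) 1, HasDerivAt (deriv f) (-(A w * f w)) w := fun w hw =>
    (hf.deriv w hw).differentiableAt.hasDerivAt.congr_deriv (eq_neg_of_add_eq_zero_left (hODE w hw))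
  have hDz : ∀ w, HasDerivAt (fun w => 1 + c * w) c w := fun w => by
    simpa using ((hasDerivAt_id w).const_mul c).const_add 1
  have h1 : ∀ w ∈ ball (0 : ℂ) 1, HasDerivAt (moebiusPullback f a μ)
      (deriv f (φ w) * (k / (1 + c * w)) + c * f (φ w)) w := fun w hw => by
    refine (((hf' _ (hφw w hw)).comp w (hφ w hw)).mul (hDz w)).congr_deriv ?_
    simp only [Function.comp_apply]
    field_simp [hD w hw]
  have h2 : HasDerivAt (fun w => deriv f (φ w) * (k / (1 + c * w)) + c * f (φ w))
      (-(A (φ z) * (k / (1 + c * z) ^ 2) ^ 2 * moebiusPullback f a μ z)) z := by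
    refine ((((hf'' _ (hφw z hz)).comp z (hφ z hz)).mul
      ((hasDerivAt_const z k).div (hDz z) (hD z hz))).add
      (((hf' _ (hφw z hz)).comp z (hφ z hz)).const_mul c)).congr_deriv ?_
    simp only [moebiusPullback, ← hφ_def, ← hc_def, Function.comp_apply, Pi.div_apply]
    field_simp [hD z hz]
    ring
  have hderiv : deriv (moebiusPullback f a μ) =ᶠ[𝓝 z]
      fun w => deriv f (φ w) * (k / (1 + c * w)) + c * f (φ w) :=
    eventually_of_mem (isOpen_ball.mem_nhds hz) fun w hw => (h1 w hw).deriv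
  rw [hderiv.deriv_eq, h2.deriv, (hφ z hz).deriv]
  ring

end Pullback

theorem AnalyticOnNhd.exists_last_zero_ofReal {h : ℂ → ℂ} (hh : AnalyticOnNhd ℂ h (ball 0 1))
    (hne : ∃ z ∈ ball (0 : ℂ) 1, h z ≠ 0) {a b : ℝ} (ha : -1 < a) (hab : a < b) (hb : b < 1)
    (h_a : h a = 0) :
    ∃ t₀ ∈ Ico a b, h t₀ = 0 ∧ ∀ t ∈ Ioo t₀ b, h t ≠ 0 := by
  have hmem := mapsTo_ofReal_Icc_ball ha hb
  have hb' := hmem (right_mem_Icc.2 hab.le)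
  have hiso : ∀ᶠ z in 𝓝[≠] (b : ℂ), h z ≠ 0 := by
    refine (hh _ hb').eventually_eq_zero_or_eventually_ne_zero.resolve_left fun h0 => ?_
    obtain ⟨z, hz, hz0⟩ := hne
    exact hz0 (hh.eqOn_zero_of_preconnected_of_eventuallyEq_zero
      (convex_ball 0 1).isPreconnected hb' h0 hz)
  refine exists_last_zero_before hab (hh.continuousOn.comp Complex.continuous_ofReal.continuousOn
    hmem) h_a ((Complex.continuous_ofReal.continuousWithinAt.tendsto_nhdsWithin ?_).eventually hiso)
  exact fun t ht => by simpa using ht.ne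

theorem exists_one_le_of_consecutive_zeros {B h : ℂ → ℂ} (hh : AnalyticOnNhd ℂ h (ball 0 1))
    (hODE : ∀ z ∈ ball (0 : ℂ) 1, deriv (deriv h) z + B z * h z = 0) {t₀ t₁ : ℝ}
    (ht₀ : -1 < t₀) (ht : t₀ < t₁) (ht₁ : t₁ < 1) (h₀ : h t₀ = 0) (h₁ : h t₁ = 0)
    (hne : ∀ t ∈ Ioo t₀ t₁, h t ≠ 0) :
    ∃ t ∈ Ioo t₀ t₁, 1 ≤ ‖B t‖ * (1 - t ^ 2) ^ 2 := by
  by_contra! hB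
  have hmem := mapsTo_ofReal_Icc_ball ht₀ ht₁
  have hsq : ∀ t ∈ Icc t₀ t₁, t ^ 2 < 1 := fun t ht => by
    nlinarith [ht₀.trans_le ht.1, ht.2.trans_lt ht₁]
  have hγ : ∀ t ∈ Icc t₀ t₁, HasDerivAt (fun s : ℝ => h s) (deriv h t) t := fun t ht =>
    (hh _ (hmem ht)).differentiableAt.hasDerivAt.comp_ofReal
  have hγ' : ∀ t ∈ Icc t₀ t₁, HasDerivAt (fun s : ℝ => deriv h s) (-(B t * h t)) t :=
    fun t ht => (hh.deriv _ (hmem ht)).differentiableAt.hasDerivAt.comp_ofReal.congr_deriv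
      (eq_neg_of_add_eq_zero_left (hODE _ (hmem ht)))
  choose! u'' hu'' hu''_ge using fun t (ht : t ∈ Ioo t₀ t₁) =>
    (hγ t (Ioo_subset_Icc_self ht)).exists_hasDerivAt_inner_div_norm_ge
      (hγ' t (Ioo_subset_Icc_self ht)) (hne t ht)
  refine sturm_comparison (u := fun t => ‖h t‖) (v := fun t => √(1 - t ^ 2))
    (p := fun t => 1 / (1 - t ^ 2) ^ 2) (q := fun t => ‖B t‖) ht
    (hh.continuousOn.comp Complex.continuous_ofReal.continuousOn hmem).norm
    (by fun_prop) (fun t ht => (hγ t (Ioo_subset_Icc_self ht)).norm (hne t ht)) hu''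
    (fun t ht => hasDerivAt_sqrt_one_sub_sq (hsq t (Ioo_subset_Icc_self ht)))
    (fun t ht => hasDerivAt_neg_div_sqrt_one_sub_sq (hsq t (Ioo_subset_Icc_self ht)))
    (by simp [h₀]) (by simp [h₁]) (fun t ht => norm_pos_iff.2 (hne t ht))
    (fun t ht => Real.sqrt_pos.2 (by linarith [hsq t ht])) (fun t ht => ?_) (fun t ht => rfl)
    (fun t ht => ?_)
  · have hpos : 0 < ‖h t‖ := norm_pos_iff.2 (hne t ht)
    refine le_trans ?_ (hu''_ge t ht)
    rw [le_div_iff₀ hpos, inner_neg_right, neg_mul, neg_le_neg_iff]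
    calc ⟪(h t : ℂ), B t * h t⟫ ≤ ‖(h t : ℂ)‖ * ‖B t * h t‖ := real_inner_le_norm _ _
      _ = ‖B t‖ * ‖h t‖ * ‖h t‖ := by rw [norm_mul]; ring
  · have hpos : 0 < 1 - t ^ 2 := by linarith [hsq t (Ioo_subset_Icc_self ht)]
    rw [lt_div_iff₀ (by positivity)]
    exact hB t ht

theorem exists_one_le_of_two_zeros {A f : ℂ → ℂ} (hf : AnalyticOnNhd ℂ f (ball 0 1))
    (hODE : ∀ z ∈ ball (0 : ℂ) 1, deriv (deriv f) z + A z * f z = 0)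
    (hf0 : ∃ z ∈ ball (0 : ℂ) 1, f z ≠ 0) {z₁ z₂ : ℂ} (hz₁ : z₁ ∈ ball (0 : ℂ) 1)
    (hz₂ : z₂ ∈ ball (0 : ℂ) 1) (hne : z₁ ≠ z₂) (hf₁ : f z₁ = 0) (hf₂ : f z₂ = 0) :
    ∃ w ∈ ball (0 : ℂ) 1, dist w z₁ ≤ dist z₂ z₁ ∧ 1 ≤ ‖A w‖ * (1 - ‖w‖ ^ 2) ^ 2 := by
  rw [mem_ball_zero_iff] at hz₁
  obtain ⟨μ, hμ, x, hx0, hx1, rfl⟩ := exists_moebius_ofReal_eq hz₁ hz₂ hne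
  have hh := hf.moebiusPullback hz₁ hμ
  have hh0 : ∃ z ∈ ball (0 : ℂ) 1, moebiusPullback f z₁ μ z ≠ 0 := by
    obtain ⟨z, hz, hfz⟩ := hf0
    obtain ⟨w, hw, rfl⟩ := surjOn_moebius hz₁ hμ hz
    exact ⟨w, hw, mul_ne_zero hfz (one_add_conj_mul_ne_zero hz₁ hμ (mem_ball_zero_iff.1 hw))⟩
  obtain ⟨t₀, ht₀, h_t₀, hne'⟩ := hh.exists_last_zero_ofReal hh0 (by norm_num) hx0 hx1
    (by simp [moebiusPullback, hf₁])
  obtain ⟨t, ht, hB⟩ := exists_one_le_of_consecutive_zeros hh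
    (fun z hz => moebiusPullback_ode hf hODE hz₁ hμ hz) (by linarith [ht₀.1]) ht₀.2 hx1 h_t₀
    (by simp [moebiusPullback, hf₂]) hne'
  have ht0 : 0 ≤ t := ht₀.1.trans ht.1.le
  have htb := mapsTo_ofReal_Icc_ball (by norm_num) hx1 ⟨ht0, ht.2.le⟩
  refine ⟨moebius z₁ μ t, mapsTo_moebius hz₁ hμ htb, ?_, ?_⟩
  · rw [dist_eq_norm, dist_eq_norm]
    exact norm_moebius_ofReal_sub_le hz₁ hμ ht0 ht.2.le hx1
  · calc 1 ≤ ‖A (moebius z₁ μ t) * deriv (moebius z₁ μ) t ^ 2‖ * (1 - t ^ 2) ^ 2 := hB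
      _ = ‖A (moebius z₁ μ t)‖ * (‖deriv (moebius z₁ μ) t‖ * (1 - ‖(t : ℂ)‖ ^ 2)) ^ 2 := by
        rw [norm_mul, norm_pow, Complex.norm_real, Real.norm_eq_abs, sq_abs]; ring
      _ = _ := by
        rw [norm_deriv_moebius_mul hz₁ hμ
          (one_add_conj_mul_ne_zero hz₁ hμ (mem_ball_zero_iff.1 htb))]

theorem exists_strictMono_tendsto_atTop_or_tendsto_nhds {g : ℕ → ℝ} {m : ℝ}
    (hg : ∀ n, m ≤ g n) : ∃ φ : ℕ → ℕ, StrictMono φ ∧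
      (Tendsto (g ∘ φ) atTop atTop ∨ ∃ c, m ≤ c ∧ Tendsto (g ∘ φ) atTop (𝓝 c)) := by
  by_cases hbdd : ∃ M, ∃ᶠ n in atTop, g n ≤ M
  · obtain ⟨M, hM⟩ := hbdd
    obtain ⟨c, hc, φ, hφ, hlim⟩ := tendsto_subseq_of_frequently_bounded (Metric.isBounded_Icc m M)
      (hM.mono fun n hn => ⟨hg n, hn⟩)
    rw [closure_Icc] at hc
    exact ⟨φ, hφ, .inr ⟨c, hc.1, hlim⟩⟩
  · push Not at hbdd
    exact ⟨id, strictMono_id, .inl (tendsto_atTop.2 fun M => (hbdd M).mono fun n hn => hn.le)⟩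

theorem stmt_1 (A : ℂ → ℂ)
    (ζ : ℂ)
    (hyp : ∀ δ : ℝ, 0 < δ → ∃ f : ℂ → ℂ,
      AnalyticOnNhd ℂ f (ball (0:ℂ) 1) ∧
      (∀ z ∈ ball (0:ℂ) 1, deriv (deriv f) z + A z * f z = 0) ∧
      ¬ (∀ z ∈ ball (0:ℂ) 1, f z = 0) ∧
      ∃ z₁ ∈ ball ζ δ ∩ ball (0:ℂ) 1, ∃ z₂ ∈ ball ζ δ ∩ ball (0:ℂ) 1,
        z₁ ≠ z₂ ∧ f z₁ = 0 ∧ f z₂ = 0) :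
    ∃ w : ℕ → ℂ, (∀ n, w n ∈ ball (0:ℂ) 1) ∧ Tendsto w atTop (𝓝 ζ) ∧
      (Tendsto (fun n => ‖A (w n)‖ * (1 - ‖w n‖ ^ 2) ^ 2)
          atTop atTop ∨
        ∃ c : ℝ, 1 ≤ c ∧
          Tendsto (fun n => ‖A (w n)‖ * (1 - ‖w n‖ ^ 2) ^ 2)
            atTop (𝓝 c)) := by
  have hnear : ∀ n : ℕ, ∃ w ∈ ball (0 : ℂ) 1,
      dist w ζ < 3 * (1 / ((n : ℝ) + 1)) ∧ 1 ≤ ‖A w‖ * (1 - ‖w‖ ^ 2) ^ 2 := by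
    intro n
    obtain ⟨f, hf, hODE, hf0, z₁, ⟨hz₁ζ, hz₁⟩, z₂, ⟨hz₂ζ, hz₂⟩, hne, hf₁, hf₂⟩ :=
      hyp (1 / ((n : ℝ) + 1)) (by positivity)
    push Not at hf0
    obtain ⟨w, hw, hwz₁, hAw⟩ := exists_one_le_of_two_zeros hf hODE hf0 hz₁ hz₂ hne hf₁ hf₂
    refine ⟨w, hw, ?_, hAw⟩
    rw [mem_ball] at hz₁ζ hz₂ζ
    linarith [dist_triangle w z₁ ζ, dist_triangle z₂ ζ z₁, dist_comm ζ z₁]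
  choose w hw hwζ hAw using hnear
  have hlim : Tendsto w atTop (𝓝 ζ) := tendsto_iff_dist_tendsto_zero.2 <|
    squeeze_zero (fun _ => dist_nonneg) (fun n => (hwζ n).le)
      (by simpa using tendsto_one_div_add_atTop_nhds_zero_nat.const_mul (3 : ℝ))
  obtain ⟨φ, hφ, hA_lim⟩ := exists_strictMono_tendsto_atTop_or_tendsto_nhds hAw
  exact ⟨w ∘ φ, fun n => hw (φ n), hlim.comp hφ.tendsto_atTop, hA_lim⟩
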